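/- Let N1, N2 be Grassmann necklaces in C([n], r). Then Int(N1) ⊆ Int(N2) if and only if every set of the necklace N1 belongs to Int(N2). -/

import Mathlib

open Finset

variable {n : ℕ} [NeZero n]

/-- Position of `x` in the cyclic order on `Fin n` starting at `i`. -/
def cpos (i x : Fin n) : ℕ := ((x - i : Fin n) : ℕ)

/-- `X ≪_i Y`: every element of `X \\ Y` precedes every element of `Y \\ X`
in the cyclic order starting at `i`. -/
def Ll (i : Fin n) (X Y : Finset (Fin n)) : Prop :=
  ∀ x ∈ X \ Y, ∀ y ∈ Y \ X, cpos i x < cpos i y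

/-- `X` and `Y` are weakly separated. -/
def WSep (X Y : Finset (Fin n)) : Prop := ∃ i : Fin n, Ll i X Y

/-- A Grassmann necklace in `C([n], r)`. -/
def IsNecklace (N : Fin n → Finset (Fin n)) (r : ℕ) : Prop :=
  (∀ i, (N i).card = r) ∧ ∀ i, (N i).erase i ⊆ N (i + 1)

/-- The interior of a necklace `N`: `r`-sets `X` with `N_i ≪_i X` for all `i`. -/
def Interior (r : ℕ) (N : Fin n → Finset (Fin n)) : Set (Finset (Fin n)) :=
  {X | X.card = r ∧ ∀ i, Ll i (N i) X}

/-!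
Each `N i` lies in `Int(N)` because an element of `N a` stays in `N m` for every `m` cyclically
between `a` and itself. Conversely, a violation `x ∈ N₂ i \ X`, `y ∈ X \ N₂ i` of `N₂ i ≪_i X`
is a violation of `N₂ i ≪_i N₁ m` as soon as `y ∈ N₁ m` and `x ∉ N₁ m`, and such an `m` exists
when `X ∈ Int(N₁)`. Since `|N₁ k| = |X|`, the conditions `N₁ y ≪_y X` and `N₁ (x+1) ≪_(x+1) X`
give `y ∈ N₁ y` and `x ∉ N₁ (x+1)`. Walking from `x + 1` to `y`, either `m = x + 1` works,
or `y` enters at some step `k → k + 1`; then `y` is the only new element, so `x ∈ N₁ (k+1)`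
would force `x ∈ N₁ k`, which `N₁ k ≪_k X` forbids since `y` precedes `x` in the order from `k`.
-/

section CyclicPosition

open Fin.NatCast

omit [NeZero n] in
lemma cpos_lt (i x : Fin n) : cpos i x < n := (x - i).isLt

lemma cpos_self (i : Fin n) : cpos i i = 0 := by simp [cpos]

lemma cpos_add_one_self (y : Fin n) : cpos (y + 1) y = n - 1 := by
  obtain ⟨m, rfl⟩ : ∃ m, n = m + 1 := ⟨n - 1, (Nat.succ_pred_eq_of_pos (NeZero.pos n)).symm⟩
  have : y - (y + 1) = -1 := by abel
  simp [cpos, this]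

lemma cpos_eq_sub_of_le {a b c : Fin n} (h : cpos a b ≤ cpos a c) :
    cpos b c = cpos a c - cpos a b := by
  have : c - b = (c - a) - (b - a) := by abel
  rw [cpos, this, Fin.coe_sub_iff_le.2 (Fin.le_def.2 h)]
  rfl

lemma cpos_eq_add_sub_of_lt {a b c : Fin n} (h : cpos a c < cpos a b) :
    cpos b c = n + cpos a c - cpos a b := by
  have : c - b = (c - a) - (b - a) := by abel
  rw [cpos, this, Fin.coe_sub_iff_lt.2 (Fin.lt_def.2 h)]
  rfl

lemma cpos_induction {P : Fin n → Prop} {a b : Fin n} (base : P a)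
    (step : ∀ k, cpos a k < cpos a b → P k → P (k + 1)) : P b := by
  have walk : ∀ j : ℕ, j ≤ cpos a b → P (a + (j : Fin n)) := by
    intro j
    induction j with
    | zero => simpa using base
    | succ j ih =>
      intro hj
      have hpos : cpos a (a + (j : Fin n)) = j := by
        simp only [cpos, add_sub_cancel_left, Fin.val_natCast]
        exact Nat.mod_eq_of_lt (by have := cpos_lt a b; omega)
      simpa [add_assoc] using step _ (by omega) (ih (by omega))
  simpa [cpos] using walk (cpos a b) le_rfl

end CyclicPosition

lemma Finset.exists_mem_sdiff_of_card_le {α : Type*} [DecidableEq α] {A B : Finset α} {a : α}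
    (hcard : B.card ≤ A.card) (ha : a ∈ B \ A) : ∃ x, x ∈ A \ B := by
  by_contra! hempty
  have hsub : A ⊆ B := fun x hx => by_contra fun hxB => hempty x (mem_sdiff.2 ⟨hx, hxB⟩)
  exact (mem_sdiff.1 ha).2 (eq_of_subset_of_card_le hsub hcard ▸ (mem_sdiff.1 ha).1)

section Separation

variable {A B : Finset (Fin n)}

lemma Ll.mem_left_of_first_mem_right {i : Fin n} (h : Ll i A B) (hcard : B.card ≤ A.card)
    (hi : i ∈ B) : i ∈ A := by
  by_contra hiA
  obtain ⟨x, hx⟩ := exists_mem_sdiff_of_card_le hcard (mem_sdiff.2 ⟨hi, hiA⟩)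
  have := h x hx i (mem_sdiff.2 ⟨hi, hiA⟩)
  rw [cpos_self] at this
  omega

lemma Ll.mem_right_of_last_mem_left {y : Fin n} (h : Ll (y + 1) A B) (hcard : A.card ≤ B.card)
    (hy : y ∈ A) : y ∈ B := by
  by_contra hyB
  obtain ⟨x, hx⟩ := exists_mem_sdiff_of_card_le hcard (mem_sdiff.2 ⟨hy, hyB⟩)
  have := h y (mem_sdiff.2 ⟨hy, hyB⟩) x hx
  have := cpos_lt (y + 1) x
  rw [cpos_add_one_self] at *
  omega

end Separation

section Necklace

variable {N : Fin n → Finset (Fin n)} {r : ℕ}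

lemma mem_of_cpos_le (hN : ∀ i, (N i).erase i ⊆ N (i + 1)) {a m z : Fin n} (hz : z ∈ N a)
    (hm : cpos a m ≤ cpos a z) : z ∈ N m := by
  refine cpos_induction (P := (z ∈ N ·)) hz (fun k hk hzk => hN k (mem_erase.2 ⟨?_, hzk⟩))
  rintro rfl
  omega

/-- `N (k + 1)` has at most one element outside `N k`. -/
lemma IsNecklace.mem_of_mem_add_one (h : IsNecklace N r) {k x y : Fin n} (hxk : x ∉ N k)
    (hxk' : x ∈ N (k + 1)) (hyk' : y ∈ N (k + 1)) (hyx : y ≠ x) : y ∈ N k := by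
  by_contra hyk
  have hsub : insert x (insert y ((N k).erase k)) ⊆ N (k + 1) := by
    simp only [insert_subset_iff]
    exact ⟨hxk', hyk', h.2 k⟩
  have hcard := card_le_card hsub
  rw [card_insert_of_notMem (by simp [hyx.symm, hxk]),
    card_insert_of_notMem (by simp [hyk]), h.1] at hcard
  have := (h.1 k ▸ pred_card_le_card_erase : r - 1 ≤ ((N k).erase k).card)
  omega

lemma IsNecklace.mem_interior (h : IsNecklace N r) (i : Fin n) : N i ∈ Interior r N := by
  refine ⟨h.1 i, fun j x hx y hy => ?_⟩
  rw [mem_sdiff] at hx hy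
  have hxj : cpos j x < cpos j i := by
    by_contra! hle
    exact hx.2 (mem_of_cpos_le h.2 hx.1 hle)
  have hyi : cpos i y < cpos i j := by
    by_contra! hle
    exact hy.2 (mem_of_cpos_le h.2 hy.1 hle)
  by_contra! hyx
  have hij : cpos i j = n + cpos j j - cpos j i := cpos_eq_add_sub_of_lt (by rw [cpos_self]; omega)
  have hiy : cpos i y = n + cpos j y - cpos j i := cpos_eq_add_sub_of_lt (by omega)
  rw [cpos_self] at hij
  omega

lemma IsNecklace.exists_mem_notMem_of_mem_interior (h : IsNecklace N r) {X : Finset (Fin n)}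
    (hX : X ∈ Interior r N) {x y : Fin n} (hy : y ∈ X) (hx : x ∉ X) :
    ∃ m, y ∈ N m ∧ x ∉ N m := by
  by_contra! hcon
  have hyy : y ∈ N y := (hX.2 y).mem_left_of_first_mem_right (by rw [hX.1, h.1]) hy
  have hyx : y ∉ N (x + 1) := fun hyx =>
    hx ((hX.2 (x + 1)).mem_right_of_last_mem_left (by rw [hX.1, h.1]) (hcon _ hyx))
  refine cpos_induction (P := (y ∉ N ·)) hyx (fun k hk hyk hyk' => ?_) hyy
  have hxk : x ∈ N k := h.mem_of_mem_add_one hyk hyk' (hcon _ hyk') (by rintro rfl; exact hx hy)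
  have hlt := hX.2 k x (mem_sdiff.2 ⟨hxk, hx⟩) y (mem_sdiff.2 ⟨hy, hyk⟩)
  have hky : cpos k y = cpos (x + 1) y - cpos (x + 1) k := cpos_eq_sub_of_le hk.le
  have hkx : cpos k x = n - 1 - cpos (x + 1) k := by
    rw [← cpos_add_one_self x]
    exact cpos_eq_sub_of_le (by rw [cpos_add_one_self]; have := cpos_lt (x + 1) k; omega)
  have := cpos_lt (x + 1) y
  omega

end Necklace

theorem necklace_interior_subset_iff_general (N₁ N₂ : Fin n → Finset (Fin n)) (r : ℕ)
    (h1 : IsNecklace N₁ r) :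
    Interior r N₁ ⊆ Interior r N₂ ↔ ∀ i, N₁ i ∈ Interior r N₂ := by
  refine ⟨fun hsub i => hsub (h1.mem_interior i), fun hN X hX => ⟨hX.1, fun i x hx y hy => ?_⟩⟩
  rw [mem_sdiff] at hx hy
  obtain ⟨m, hym, hxm⟩ := h1.exists_mem_notMem_of_mem_interior hX hy.1 hx.2
  exact (hN m).2 i x (mem_sdiff.2 ⟨hx.1, hxm⟩) y (mem_sdiff.2 ⟨hym, hy.2⟩)

/-- Lemma 3: `Int(N₁) ⊆ Int(N₂)` iff every set of the necklace `N₁` belongs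
to `Int(N₂)`. -/
theorem necklace_interior_subset_iff (N₁ N₂ : Fin n → Finset (Fin n)) (r : ℕ)
    (h1 : IsNecklace N₁ r) (h2 : IsNecklace N₂ r)
    (hi1 : ∀ i, i ∈ N₁ i) (hi2 : ∀ i, i ∈ N₂ i) :
    Interior r N₁ ⊆ Interior r N₂ ↔ ∀ i, N₁ i ∈ Interior r N₂ :=
  necklace_interior_subset_iff_general N₁ N₂ r h1
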